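/- The function m ↦ V_m + 8πm² is strictly increasing on [0, ∞). In particular, since V_0 = 0, one has V_m + 8πm² > 0 for every m > 0. (Here 8πm² = (1/2)·16πm² is half the area of the horizon sphere {s = 2m} of Schwarzschild–anti-deSitter of mass m, so this is the sharp renormalized volume comparison V(M̄_m, ḡ_m) + (1/2)·Area(∂M̄_m) > 0 for the exact Schwarzschild-AdS model.) -/

import Mathlib

open Real MeasureTheory Filter

/-- Volume of the centered coordinate ball of radius `R` in hyperbolic space. -/
noncomputable def hypVol (R : ℝ) : ℝ :=
  4 * π * ∫ s in (0:ℝ)..R, s ^ 2 / Real.sqrt (1 + s ^ 2)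

/-- Volume of the centered coordinate ball of radius `R` in
Schwarzschild-anti-deSitter of mass `m`. -/
noncomputable def sAdSVol (m R : ℝ) : ℝ :=
  4 * π * ∫ s in (2 * m)..R, s ^ 2 / Real.sqrt (1 + s ^ 2 - 2 * m / s)

/-- The renormalized volume `V_m = lim_{R→∞} (Vol_m(R) - Vol₀(R))` of
Schwarzschild-anti-deSitter of mass `m`. -/
noncomputable def renormVol (m : ℝ) : ℝ :=
  limUnder atTop (fun R => sAdSVol m R - hypVol R)

/-!
With `ρ_m(s) = s² (1 + s² - 2m/s)^(-1/2)`, the radicand lies between `s²` and `1 + s²` on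
`(2m, ∞)`, which gives `0 ≤ ρ_m - ρ_0 ≤ m / s²` there; so `V_m = 4π ∫_{2m}^∞ (ρ_m - ρ_0) - Vol₀(2m)`
exists. For `m₁ < m₂`, `ρ_{m₁} ≤ ρ_{m₂}` on `[2m₂, ∞)` gives
`Vol_{m₁}(R) ≤ Vol_{m₁}(2m₂) + Vol_{m₂}(R)`, hence `V_{m₁} ≤ V_{m₂} + Vol_{m₁}(2m₂)`, while `ρ_{m₁}(s) < s`
gives `Vol_{m₁}(2m₂) < 4π ∫_{2m₁}^{2m₂} s ds = 8π (m₂² - m₁²)`.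
-/

open Set
open scoped Topology

noncomputable def sAdSDensity (m s : ℝ) : ℝ := s ^ 2 / √(1 + s ^ 2 - 2 * m / s)

section

variable {m m₁ m₂ r R s : ℝ}

lemma sAdSVol_eq_integral (m R : ℝ) : sAdSVol m R = 4 * π * ∫ s in (2 * m)..R, sAdSDensity m s :=
  rfl

lemma hypVol_eq_sAdSVol_zero : hypVol = sAdSVol 0 := by
  funext R
  simp [hypVol, sAdSVol]

lemma sAdSDensity_zero : sAdSDensity 0 = fun s => s ^ 2 / √(1 + s ^ 2) := by
  funext s
  simp [sAdSDensity]

lemma sq_lt_one_add_sq_sub (hm : 0 ≤ m) (hs : 2 * m < s) : s ^ 2 < 1 + s ^ 2 - 2 * m / s := by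
  have : 2 * m / s < 1 := (div_lt_one (by linarith)).2 hs
  linarith

lemma sAdSDensity_lt_self (hm : 0 ≤ m) (hs : 2 * m < s) : sAdSDensity m s < s := by
  have hs0 : 0 < s := by linarith
  calc sAdSDensity m s < s ^ 2 / √(s ^ 2) :=
        div_lt_div_of_pos_left (by positivity) (by positivity)
          (Real.sqrt_lt_sqrt (sq_nonneg s) (sq_lt_one_add_sq_sub hm hs))
    _ = s := by rw [Real.sqrt_sq hs0.le]; field_simp

lemma sAdSDensity_le_sAdSDensity (hm₂ : 0 ≤ m₂) (h : m₁ ≤ m₂) (hs : 2 * m₂ < s) :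
    sAdSDensity m₁ s ≤ sAdSDensity m₂ s := by
  have hs0 : 0 < s := by linarith
  have hpos : 0 < 1 + s ^ 2 - 2 * m₂ / s := (sq_nonneg s).trans_lt (sq_lt_one_add_sq_sub hm₂ hs)
  refine div_le_div_of_nonneg_left (sq_nonneg s) (Real.sqrt_pos.2 hpos) (Real.sqrt_le_sqrt ?_)
  have : 2 * m₁ / s ≤ 2 * m₂ / s := by gcongr
  linarith

lemma sAdSDensity_sub_le (hm : 0 ≤ m) (hs : 2 * m < s) :
    sAdSDensity m s - sAdSDensity 0 s ≤ m / s ^ 2 := by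
  have hs0 : 0 < s := by linarith
  set a := √(1 + s ^ 2 - 2 * m / s)
  set b := √(1 + s ^ 2)
  have ha : s < a := by
    rw [← Real.sqrt_sq hs0.le]
    exact Real.sqrt_lt_sqrt (sq_nonneg s) (sq_lt_one_add_sq_sub hm hs)
  have ha0 : 0 < a := hs0.trans ha
  have hab : a ≤ b := Real.sqrt_le_sqrt (sub_le_self _ (by positivity))
  have hdiff : s * (b - a) * (b + a) = 2 * m := by
    have ha2 : a ^ 2 = 1 + s ^ 2 - 2 * m / s :=
      Real.sq_sqrt (by nlinarith [sq_lt_one_add_sq_sub hm hs])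
    have hb2 : b ^ 2 = 1 + s ^ 2 := Real.sq_sqrt (by positivity)
    field_simp at ha2
    nlinarith
  have hcube : 2 * s ^ 3 ≤ (a + b) * (a * b) := by
    have : s * s ≤ a * b := mul_le_mul ha.le (ha.le.trans hab) hs0.le ha0.le
    nlinarith
  have key := mul_le_mul_of_nonneg_left hcube (mul_nonneg hs0.le (sub_nonneg.2 hab))
  have hdiff' := congrArg (· * (a * b)) hdiff
  rw [show sAdSDensity 0 s = s ^ 2 / b by simp [sAdSDensity, b],
    show sAdSDensity m s = s ^ 2 / a from rfl, div_sub_div _ _ ha0.ne' (ha0.trans_le hab).ne',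
    div_le_div_iff₀ (by positivity) (by positivity)]
  linarith

lemma continuousOn_sAdSDensity (hm : 0 ≤ m) : ContinuousOn (sAdSDensity m) (Ici (2 * m)) := by
  rcases hm.eq_or_lt with rfl | hm
  · rw [sAdSDensity_zero]
    exact (Continuous.div (by fun_prop) (by fun_prop) fun s => by positivity).continuousOn
  have hs0 : ∀ s ∈ Ici (2 * m), 0 < s := fun s hs => lt_of_lt_of_le (by positivity) hs
  refine ContinuousOn.div (by fun_prop) ?_ fun s hs => ?_
  · exact (ContinuousOn.sub (by fun_prop) (continuousOn_const.div continuousOn_id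
      fun s hs => (hs0 s hs).ne')).sqrt
  · have : 2 * m / s ≤ 1 := (div_le_one (hs0 s hs)).2 hs
    have : 0 < s ^ 2 := pow_pos (hs0 s hs) 2
    exact (Real.sqrt_pos.2 (by linarith)).ne'

lemma intervalIntegrable_sAdSDensity (hm : 0 ≤ m) (hr : 2 * m ≤ r) (hR : 2 * m ≤ R) :
    IntervalIntegrable (sAdSDensity m) volume r R :=
  ((continuousOn_sAdSDensity hm).mono fun _ hx => (le_min hr hR).trans hx.1).intervalIntegrable

lemma integrableOn_sAdSDensity_sub (hm : 0 ≤ m) :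
    IntegrableOn (fun s => sAdSDensity m s - sAdSDensity 0 s) (Ioi (2 * m)) := by
  rcases hm.eq_or_lt with rfl | hm
  · simp
  have hbound : IntegrableOn (fun s : ℝ => m * s ^ (-2 : ℝ)) (Ioi (2 * m)) :=
    (integrableOn_Ioi_rpow_of_lt (by norm_num) (by positivity)).const_mul m
  refine hbound.mono' ?_ ?_
  · have hρ₀ : ContinuousOn (sAdSDensity 0) (Ici (2 * m)) :=
      (continuousOn_sAdSDensity le_rfl).mono (Ici_subset_Ici.2 (by linarith))
    exact (((continuousOn_sAdSDensity hm.le).sub hρ₀).mono Ioi_subset_Ici_self).aestronglyMeasurable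
      measurableSet_Ioi
  · filter_upwards [ae_restrict_mem measurableSet_Ioi] with s (hs : 2 * m < s)
    have hs0 : 0 < s := by linarith
    rw [Real.norm_of_nonneg (sub_nonneg.2 (sAdSDensity_le_sAdSDensity hm.le hm.le hs)),
      Real.rpow_neg hs0.le, Real.rpow_two, ← div_eq_mul_inv]
    exact sAdSDensity_sub_le hm.le hs

lemma sAdSVol_eq_add (hm : 0 ≤ m) (hr : 2 * m ≤ r) (hR : 2 * m ≤ R) :
    sAdSVol m R = sAdSVol m r + 4 * π * ∫ s in r..R, sAdSDensity m s := by
  rw [sAdSVol_eq_integral, sAdSVol_eq_integral, ← mul_add,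
    intervalIntegral.integral_add_adjacent_intervals
      (intervalIntegrable_sAdSDensity hm le_rfl hr) (intervalIntegrable_sAdSDensity hm hr hR)]

lemma sAdSVol_sub_hypVol (hm : 0 ≤ m) (hR : 2 * m ≤ R) :
    sAdSVol m R - hypVol R
      = 4 * π * (∫ s in (2 * m)..R, (sAdSDensity m s - sAdSDensity 0 s)) - hypVol (2 * m) := by
  have h0 : (2 : ℝ) * 0 ≤ 2 * m := by linarith
  rw [hypVol_eq_sAdSVol_zero, sAdSVol_eq_add le_rfl h0 (h0.trans hR), sAdSVol_eq_integral,
    intervalIntegral.integral_sub (intervalIntegrable_sAdSDensity hm le_rfl hR)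
      (intervalIntegrable_sAdSDensity le_rfl h0 (h0.trans hR))]
  ring

lemma tendsto_sAdSVol_sub_hypVol (hm : 0 ≤ m) :
    Tendsto (fun R => sAdSVol m R - hypVol R) atTop
      (𝓝 (4 * π * (∫ s in Ioi (2 * m), (sAdSDensity m s - sAdSDensity 0 s)) - hypVol (2 * m))) := by
  refine Tendsto.congr' ?_ (((intervalIntegral_tendsto_integral_Ioi (2 * m)
    (integrableOn_sAdSDensity_sub hm) tendsto_id).const_mul (4 * π)).sub_const (hypVol (2 * m)))
  filter_upwards [eventually_ge_atTop (2 * m)] with R hR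
  exact (sAdSVol_sub_hypVol hm hR).symm

lemma tendsto_renormVol (hm : 0 ≤ m) :
    Tendsto (fun R => sAdSVol m R - hypVol R) atTop (𝓝 (renormVol m)) :=
  tendsto_nhds_limUnder ⟨_, tendsto_sAdSVol_sub_hypVol hm⟩

lemma renormVol_zero : renormVol 0 = 0 := by
  simp only [renormVol, hypVol_eq_sAdSVol_zero, sub_self]
  exact tendsto_const_nhds.limUnder_eq

lemma sAdSVol_le_add (hm₁ : 0 ≤ m₁) (h : m₁ ≤ m₂) (hR : 2 * m₂ ≤ R) :
    sAdSVol m₁ R ≤ sAdSVol m₁ (2 * m₂) + sAdSVol m₂ R := by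
  rw [sAdSVol_eq_add (r := 2 * m₂) hm₁ (by linarith) (by linarith), sAdSVol_eq_integral m₂ R]
  gcongr
  exact intervalIntegral.integral_mono_on_of_le_Ioo hR
    (intervalIntegrable_sAdSDensity hm₁ (by linarith) (by linarith))
    (intervalIntegrable_sAdSDensity (hm₁.trans h) le_rfl hR)
    fun s hs => sAdSDensity_le_sAdSDensity (hm₁.trans h) h hs.1

lemma renormVol_le_add (hm₁ : 0 ≤ m₁) (h : m₁ ≤ m₂) :
    renormVol m₁ ≤ renormVol m₂ + sAdSVol m₁ (2 * m₂) := by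
  refine le_of_tendsto_of_tendsto (tendsto_renormVol hm₁)
    ((tendsto_renormVol (hm₁.trans h)).add_const _) ?_
  filter_upwards [eventually_ge_atTop (2 * m₂)] with R hR
  linarith [sAdSVol_le_add hm₁ h hR]

lemma sAdSVol_lt (hm : 0 ≤ m) (hr : 2 * m < r) : sAdSVol m r < 2 * π * (r ^ 2 - (2 * m) ^ 2) := by
  have hlt : ∫ s in (2 * m)..r, sAdSDensity m s < ∫ s in (2 * m)..r, s :=
    intervalIntegral.integral_lt_integral_of_continuousOn_of_le_of_exists_lt hr
      ((continuousOn_sAdSDensity hm).mono Icc_subset_Ici_self) continuousOn_id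
      (fun s hs => (sAdSDensity_lt_self hm hs.1).le) ⟨r, right_mem_Icc.2 hr.le, sAdSDensity_lt_self hm hr⟩
  rw [integral_id] at hlt
  rw [sAdSVol_eq_integral]
  nlinarith [Real.pi_pos]

end

/-- `m ↦ V_m + 8πm²` (renormalized volume plus half the horizon
area `16πm²`) is strictly increasing on `[0,∞)`; in particular it is positive
for every `m > 0`. -/
theorem renormVol_plus_half_horizon_strictMono :
    StrictMonoOn (fun m => renormVol m + 8 * π * m ^ 2) (Set.Ici 0)
    ∧ ∀ m : ℝ, 0 < m → 0 < renormVol m + 8 * π * m ^ 2 := by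
  have hmono : StrictMonoOn (fun m => renormVol m + 8 * π * m ^ 2) (Set.Ici 0) := by
    intro m₁ (hm₁ : 0 ≤ m₁) m₂ _ h
    have hV := renormVol_le_add hm₁ h.le
    have hvol := sAdSVol_lt hm₁ (by linarith : 2 * m₁ < 2 * m₂)
    dsimp only
    linarith
  refine ⟨hmono, fun m hm => ?_⟩
  simpa [renormVol_zero] using hmono (mem_Ici.2 le_rfl) hm.le hm
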